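/- arXiv:2310.15441 — 2 statements merged into one kernel-verified Lean document; each statement's English description precedes it below -/
import Mathlib

section
/- Let (ξ_n)_{n≥0} be i.i.d. standard normal random variables and β > 0. If s > 2β e^{γ/2}, then (s/(√2 β))^n |ξ_0 ξ_1 ⋯ ξ_{n-1}| → +∞ almost surely as n → ∞. -/
open MeasureTheory ProbabilityTheory Filter Real Set
open scoped Topology

/-!
Taking logarithms, `log ((s / (√2 β)) ^ n |ξ₀ ⋯ ξₙ₋₁|) = n log (s / (√2 β)) + ∑_{i<n} log |ξᵢ|`,
and by the strong law of large numbers the sum is `n (𝔼 log |ξ₀| + o(1))` almost surely.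
Differentiating `∫₀^∞ x ^ q e^{-x²/2} dx = 2 ^ ((q - 1) / 2) Γ((q + 1) / 2)` at `q = 0`, where
`Γ'(1/2) = -√π (γ + 2 log 2)`, gives `𝔼 log |ξ₀| = -(γ + log 2) / 2`. The hypothesis on `s` says
exactly that the resulting linear drift `log (s / (√2 β)) - (γ + log 2) / 2` is positive.
-/

local notation "γ" => eulerMascheroniConstant

lemma abs_rpow_mul_log_le {x q : ℝ} (hx : 0 < x) (hq : |q| ≤ 1 / 2) :
    |x ^ q * log x| ≤ 4 * (x ^ (-(3 / 4) : ℝ) + x ^ (3 / 4 : ℝ)) := by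
  rw [abs_mul, abs_of_pos (rpow_pos_of_pos hx q)]
  have h₁ := rpow_pos_of_pos hx (-(3 / 4))
  have h₂ := rpow_pos_of_pos hx (3 / 4)
  rcases le_or_gt 1 x with hx1 | hx1
  · have hpow : x ^ q ≤ x ^ (1 / 2 : ℝ) := rpow_le_rpow_of_exponent_le hx1 (abs_le.mp hq).2
    have hlog : |log x| ≤ x ^ (1 / 4 : ℝ) / (1 / 4) := by
      rw [abs_of_nonneg (log_nonneg hx1)]
      exact log_le_rpow_div hx.le (by norm_num)
    calc x ^ q * |log x| ≤ x ^ (1 / 2 : ℝ) * (x ^ (1 / 4 : ℝ) / (1 / 4)) :=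
          mul_le_mul hpow hlog (abs_nonneg _) (by positivity)
      _ = 4 * x ^ (3 / 4 : ℝ) := by
        rw [mul_div_assoc', ← rpow_add hx]; norm_num; ring
      _ ≤ _ := by linarith
  · have hpow : x ^ q ≤ x ^ (-(1 / 2) : ℝ) := rpow_le_rpow_of_exponent_ge hx hx1.le (abs_le.mp hq).1
    have hlog : |log x| ≤ x ^ (-(1 / 4) : ℝ) / (1 / 4) := by
      rw [abs_of_neg (log_neg hx hx1), ← log_inv, rpow_neg hx.le, ← inv_rpow hx.le]
      exact log_le_rpow_div (by positivity) (by norm_num)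
    calc x ^ q * |log x| ≤ x ^ (-(1 / 2) : ℝ) * (x ^ (-(1 / 4) : ℝ) / (1 / 4)) :=
          mul_le_mul hpow hlog (abs_nonneg _) (by positivity)
      _ = 4 * x ^ (-(3 / 4) : ℝ) := by
        rw [mul_div_assoc', ← rpow_add hx]; norm_num; ring
      _ ≤ _ := by linarith

lemma integrableOn_log_mul_exp_neg_mul_sq_and_hasDerivAt {b : ℝ} (hb : 0 < b) :
    IntegrableOn (fun x => log x * exp (-b * x ^ 2)) (Ioi 0) ∧
      HasDerivAt (fun q : ℝ => ∫ x in Ioi 0, x ^ q * exp (-b * x ^ 2))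
        (∫ x in Ioi 0, log x * exp (-b * x ^ 2)) 0 := by
  have key := hasDerivAt_integral_of_dominated_loc_of_deriv_le
    (F := fun q x => x ^ q * exp (-b * x ^ 2))
    (F' := fun q x => x ^ q * log x * exp (-b * x ^ 2))
    (bound := fun x => 4 * (x ^ (-(3 / 4) : ℝ) + x ^ (3 / 4 : ℝ)) * exp (-b * x ^ 2))
    (Metric.ball_mem_nhds (0 : ℝ) one_half_pos)
    (Eventually.of_forall fun q => by fun_prop)
    (integrableOn_rpow_mul_exp_neg_mul_sq hb (by norm_num)) (by fun_prop) ?bound ?integrable ?deriv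
  · simp only [rpow_zero, one_mul] at key
    exact key
  case bound =>
    filter_upwards [ae_restrict_mem measurableSet_Ioi] with x (hx : 0 < x) q hq
    rw [norm_mul, norm_of_nonneg (exp_pos _).le]
    gcongr
    rw [Metric.mem_ball, dist_zero_right, norm_eq_abs] at hq
    exact abs_rpow_mul_log_le hx hq.le
  case integrable =>
    have hint := fun r (hr : -1 < r) => integrableOn_rpow_mul_exp_neg_mul_sq hb hr
    simpa only [Pi.add_def, mul_add, add_mul, mul_assoc] using
      ((hint _ (by norm_num)).const_mul 4).add ((hint (3 / 4) (by norm_num)).const_mul 4)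
  case deriv =>
    filter_upwards [ae_restrict_mem measurableSet_Ioi] with x (hx : 0 < x) q _
    exact (hasStrictDerivAt_const_rpow hx q).hasDerivAt.mul_const _

lemma hasDerivAt_integral_rpow_mul_exp_neg_mul_sq {b : ℝ} (hb : 0 < b) :
    HasDerivAt (fun q : ℝ => ∫ x in Ioi 0, x ^ q * exp (-b * x ^ 2))
      (-(√(π / b) / 4) * (γ + log (4 * b))) 0 := by
  have hGamma_formula : (fun q : ℝ => ∫ x in Ioi 0, x ^ q * exp (-b * x ^ 2)) =ᶠ[𝓝 0]
      fun q => b ^ (-(q + 1) / 2) * (1 / 2) * Gamma ((q + 1) / 2) := by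
    filter_upwards [Ioi_mem_nhds neg_one_lt_zero] with q hq
    simp_rw [← rpow_two]
    exact integral_rpow_mul_exp_neg_mul_rpow two_pos hq hb
  have hu : HasDerivAt (fun q : ℝ => (q + 1) / 2) (1 / 2) 0 :=
    ((hasDerivAt_id' 0).add_const 1).div_const 2
  have hpow : HasDerivAt (fun q : ℝ => b ^ (-(q + 1) / 2))
      (log b * (-1 / 2) * b ^ (-(1 / 2) : ℝ)) 0 := by
    have := (((hasDerivAt_id' 0).add_const 1).neg.div_const 2).const_rpow hb
    norm_num at this ⊢
    exact this
  have hGamma := hasDerivAt_Gamma_one_half.comp_of_eq 0 hu (by norm_num)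
  refine (((hpow.mul_const (1 / 2)).mul hGamma).congr_of_eventuallyEq hGamma_formula).congr_deriv ?_
  rw [Function.comp_apply, show (-((0 : ℝ) + 1) / 2) = -(1 / 2) by norm_num,
    show ((0 : ℝ) + 1) / 2 = 1 / 2 by norm_num, rpow_neg hb.le, ← sqrt_eq_rpow, Gamma_one_half_eq,
    sqrt_div' π hb.le, log_mul (by norm_num) hb.ne', show (4 : ℝ) = 2 ^ 2 by norm_num, log_pow]
  have := sqrt_pos.mpr hb
  field_simp
  ring

lemma integral_log_mul_exp_neg_mul_sq {b : ℝ} (hb : 0 < b) :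
    ∫ x in Ioi 0, log x * exp (-b * x ^ 2) = -(√(π / b) / 4) * (γ + log (4 * b)) :=
  (integrableOn_log_mul_exp_neg_mul_sq_and_hasDerivAt hb).2.unique
    (hasDerivAt_integral_rpow_mul_exp_neg_mul_sq hb)

lemma gaussianPDFReal_zero_one_smul (x y : ℝ) :
    gaussianPDFReal 0 1 x • y = (√(2 * π))⁻¹ * (y * exp (-(1 / 2) * |x| ^ 2)) := by
  rw [gaussianPDFReal, smul_eq_mul, sq_abs]
  push_cast
  ring_nf

lemma integrable_comp_abs_of_integrableOn_Ioi {E : Type*} [NormedAddCommGroup E] {f : ℝ → E}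
    (hf : IntegrableOn f (Ioi 0)) : Integrable (fun x => f |x|) := by
  have hIoi : IntegrableOn (fun x => f |x|) (Ioi 0) :=
    hf.congr_fun (fun x (hx : 0 < x) => by rw [abs_of_pos hx]) measurableSet_Ioi
  have hIic : IntegrableOn (fun x => f |x|) (Iic 0) := by
    have hneg : MeasurableEmbedding fun x : ℝ => -x := (Homeomorph.neg ℝ).measurableEmbedding
    rw [← Measure.map_neg_eq_self (volume : Measure ℝ), hneg.integrableOn_map_iff]
    simp_rw [Function.comp_def, abs_neg, neg_preimage, neg_Iic, neg_zero]
    exact (integrableOn_Ici_iff_integrableOn_Ioi).mpr hIoi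
  simpa only [Iic_union_Ioi, integrableOn_univ] using hIic.union hIoi

lemma integrable_log_abs_gaussianReal : Integrable (fun x => log |x|) (gaussianReal 0 1) := by
  rw [gaussianReal_of_var_ne_zero 0 one_ne_zero,
    integrable_withDensity_iff_integrable_smul' (measurable_gaussianPDF 0 1)
      (ae_of_all _ fun _ => gaussianPDF_lt_top)]
  simp_rw [toReal_gaussianPDF, gaussianPDFReal_zero_one_smul]
  exact (integrable_comp_abs_of_integrableOn_Ioi
    (integrableOn_log_mul_exp_neg_mul_sq_and_hasDerivAt one_half_pos).1).const_mul _

lemma integral_log_abs_gaussianReal : ∫ x, log |x| ∂gaussianReal 0 1 = -(γ + log 2) / 2 := by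
  simp_rw [integral_gaussianReal_eq_integral_smul one_ne_zero, gaussianPDFReal_zero_one_smul,
    integral_const_mul]
  rw [integral_comp_abs (f := fun x => log x * exp (-(1 / 2) * x ^ 2)),
    integral_log_mul_exp_neg_mul_sq one_half_pos]
  have : 0 < √(2 * π) := by positivity
  rw [show π / (1 / 2) = 2 * π by ring, show (4 : ℝ) * (1 / 2) = 2 by norm_num]
  field_simp
  ring

lemma tendsto_atTop_of_tendsto_div_natCast {u : ℕ → ℝ} {L : ℝ} (hL : 0 < L)
    (hu : Tendsto (fun n => u n / n) atTop (𝓝 L)) : Tendsto u atTop atTop := by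
  refine (hu.pos_mul_atTop hL tendsto_natCast_atTop_atTop).congr' ?_
  filter_upwards [eventually_ne_atTop 0] with n hn
  exact div_mul_cancel₀ _ (Nat.cast_ne_zero.mpr hn)

lemma tendsto_pow_mul_abs_prod_atTop {x : ℕ → ℝ} {r m : ℝ} (hr : 0 < r) (hx : ∀ i, x i ≠ 0)
    (hm : Tendsto (fun n : ℕ => (n : ℝ)⁻¹ • ∑ i ∈ Finset.range n, log |x i|) atTop (𝓝 m))
    (hrm : 0 < log r + m) :
    Tendsto (fun n => r ^ n * |∏ i ∈ Finset.range n, x i|) atTop atTop := by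
  have hexp : ∀ n, r ^ n * |∏ i ∈ Finset.range n, x i|
      = exp (n * log r + ∑ i ∈ Finset.range n, log |x i|) := fun n => by
    rw [exp_add, exp_nat_mul, exp_log hr, exp_sum, Finset.abs_prod]
    simp_rw [exp_log (abs_pos.mpr (hx _))]
  simp_rw [hexp]
  refine tendsto_exp_atTop.comp (tendsto_atTop_of_tendsto_div_natCast hrm ?_)
  refine (tendsto_const_nhds.add hm).congr' ?_
  filter_upwards [eventually_ne_atTop 0] with n hn
  rw [smul_eq_mul]
  field_simp

lemma ae_tendsto_average_log_abs_of_gaussian {Ω : Type*} {mΩ : MeasurableSpace Ω}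
    {P : Measure Ω} {ξ : ℕ → Ω → ℝ} (hmeas : ∀ n, Measurable (ξ n))
    (hindep : Pairwise fun i j => ξ i ⟂ᵢ[P] ξ j) (hgauss : ∀ n, P.map (ξ n) = gaussianReal 0 1) :
    ∀ᵐ ω ∂P, Tendsto (fun n : ℕ => (n : ℝ)⁻¹ • ∑ i ∈ Finset.range n, log |ξ i ω|)
      atTop (𝓝 (-(γ + log 2) / 2)) := by
  have hlog : Measurable fun x : ℝ => log |x| := by fun_prop
  have hlaw : HasLaw (ξ 0) (gaussianReal 0 1) P := ⟨(hmeas 0).aemeasurable, hgauss 0⟩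
  have hint : Integrable (fun ω => log |ξ 0 ω|) P :=
    (integrable_map_measure hlog.aestronglyMeasurable hlaw.aemeasurable).mp
      (hlaw.map_eq ▸ integrable_log_abs_gaussianReal)
  have hmean : ∫ ω, log |ξ 0 ω| ∂P = -(γ + log 2) / 2 :=
    (hlaw.integral_comp hlog.aestronglyMeasurable).trans integral_log_abs_gaussianReal
  have hident : ∀ i, IdentDistrib (fun ω => log |ξ i ω|) (fun ω => log |ξ 0 ω|) P P := fun i =>
    (IdentDistrib.mk (hmeas i).aemeasurable (hmeas 0).aemeasurable
      (by rw [hgauss, hgauss])).comp hlog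
  have := strong_law_ae (fun i ω => log |ξ i ω|) hint
    (fun i j hij => (hindep hij).comp hlog hlog) hident
  simpa only [hmean] using this

lemma ae_ne_zero_of_map_eq_gaussianReal {Ω : Type*} {mΩ : MeasurableSpace Ω} {P : Measure Ω}
    {X : Ω → ℝ} (hX : Measurable X) (hgauss : P.map X = gaussianReal 0 1) : ∀ᵐ ω ∂P, X ω ≠ 0 := by
  have := nullSingletonClass_gaussianReal (μ := 0) one_ne_zero
  exact ae_of_ae_map hX.aemeasurable (hgauss ▸ (gaussianReal 0 1).ae_ne 0)

theorem gaussian_product_tendsto_top_general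
    {Ω : Type*} [MeasureSpace Ω]
    (β s : ℝ) (hβ : 0 < β)
    (ξ : ℕ → Ω → ℝ) (hmeas : ∀ n, Measurable (ξ n))
    (hindep : iIndepFun ξ ℙ)
    (hgauss : ∀ n, Measure.map (ξ n) ℙ = gaussianReal 0 1)
    (hs : 2 * β * Real.exp (Real.eulerMascheroniConstant / 2) < s) :
    ∀ᵐ ω ∂ℙ, Tendsto
      (fun n => (s / (Real.sqrt 2 * β)) ^ n * |∏ i ∈ Finset.range n, ξ i ω|)
      atTop Filter.atTop := by
  have hs₀ : 0 < s := lt_trans (by positivity) hs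
  have hrate : 0 < log (s / (√2 * β)) + -(γ + log 2) / 2 := by
    have := log_lt_log (by positivity) hs
    rw [log_mul (by positivity) (exp_ne_zero _), log_mul two_ne_zero hβ.ne', log_exp] at this
    rw [log_div hs₀.ne' (by positivity), log_mul (by positivity) hβ.ne', log_sqrt zero_le_two]
    linarith
  have hne : ∀ᵐ ω ∂ℙ, ∀ i, ξ i ω ≠ 0 :=
    ae_all_iff.mpr fun i => ae_ne_zero_of_map_eq_gaussianReal (hmeas i) (hgauss i)
  filter_upwards [ae_tendsto_average_log_abs_of_gaussian hmeas
    (fun i j hij => hindep.indepFun hij) hgauss, hne] with ω hlln hω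
  exact tendsto_pow_mul_abs_prod_atTop (by positivity) hω hlln hrate

/-- If `(ξ_n)` are i.i.d. standard normal, `β > 0`, `s > 2β e^{γ/2}`, then
`(s/(√2β))^n |ξ_0 ⋯ ξ_{n-1}| → +∞` almost surely. -/
theorem gaussian_product_tendsto_top
    {Ω : Type*} [MeasureSpace Ω] [IsProbabilityMeasure (ℙ : Measure Ω)]
    (β s : ℝ) (hβ : 0 < β)
    (ξ : ℕ → Ω → ℝ) (hmeas : ∀ n, Measurable (ξ n))
    (hindep : iIndepFun ξ ℙ)
    (hgauss : ∀ n, Measure.map (ξ n) ℙ = gaussianReal 0 1)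
    (hs : 2 * β * Real.exp (Real.eulerMascheroniConstant / 2) < s) :
    ∀ᵐ ω ∂ℙ, Tendsto
      (fun n => (s / (Real.sqrt 2 * β)) ^ n * |∏ i ∈ Finset.range n, ξ i ω|)
      atTop Filter.atTop :=
  gaussian_product_tendsto_top_general β s hβ ξ hmeas hindep hgauss hs
end

section
/- Fix β > 0, a, b ∈ ℝ with a ≠ 0, and d₁ < d₂. For r ∈ ℕ, let Ω_r = { (d₂-d₁) Σ_{i=1}^{r} q_i 2^{-i} + d₁ : q_i ∈ {0,1} }. Then the Boltzmann distributions B(β, Ω_r, (ax-b)²) converge in distribution, as r → ∞, to the truncated normal distribution N(b/a, 1/(2a²β²), d₁, d₂), i.e. the distribution with density proportional to e^{-(t - b/a)² a² β²} on (d₁, d₂) and zero outside. -/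
open MeasureTheory Filter

open scoped Classical in
/-- The set `{ (d₂-d₁) Σ_{i=1}^{r} q_i 2^{-i} + d₁ : q_i ∈ {0,1} }`. -/
noncomputable def omegaSetTrunc (d₁ d₂ : ℝ) (r : ℕ) : Finset ℝ :=
  (Finset.Icc 1 r).powerset.image fun S : Finset ℕ => (d₂ - d₁) * ∑ i ∈ S, (2 : ℝ) ^ (-(i : ℤ)) + d₁

/-- The Boltzmann distribution on a finite set `S` with inverse-temperature parameter `β` and
target function `H`: the probability of `x ∈ S` is `e^{-β²H(x)} / Σ_{y∈S} e^{-β²H(y)}`. -/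
noncomputable def boltzmann (β : ℝ) (S : Finset ℝ) (H : ℝ → ℝ) : Measure ℝ :=
  ∑ x ∈ S,
    (ENNReal.ofReal (Real.exp (-β ^ 2 * H x) / ∑ y ∈ S, Real.exp (-β ^ 2 * H y))) •
      Measure.dirac x

/-- The truncated normal distribution `N(μ, v, d₁, d₂)` with mean parameter `μ`, variance
parameter `v`, truncated to `(d₁, d₂)`: density proportional to `e^{-(t-μ)²/(2v)} 𝟙_{(d₁,d₂)}`. -/
noncomputable def truncGaussian (μ v d₁ d₂ : ℝ) : Measure ℝ :=
  volume.withDensity fun t =>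
    ENNReal.ofReal
      (Set.indicator (Set.Ioo d₁ d₂)
        (fun t => Real.exp (-(t - μ) ^ 2 / (2 * v)) /
          ∫ s in Set.Ioo d₁ d₂, Real.exp (-(s - μ) ^ 2 / (2 * v))) t)

/-!
The dyadic set `Ω_r` is exactly the uniform grid `d₁ + k (d₂ - d₁) / 2^r`, `k < 2^r`, so
integrating `f` against the Boltzmann distribution gives the ratio of the left Riemann sums of
`f g` and `g` on `[d₁, d₂]`, where `g t = e^{-β²(at-b)²}`. These converge to the integrals of
`f g` and `g`, the latter being positive, and `g` is, up to normalisation, the density of the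
truncated normal distribution `N(b/a, 1/(2a²β²), d₁, d₂)`.
-/

open Finset Topology

noncomputable def gridPoint (a b : ℝ) (n k : ℕ) : ℝ := a + k * ((b - a) / n)

noncomputable def leftRiemannSum (φ : ℝ → ℝ) (a b : ℝ) (n : ℕ) : ℝ :=
  ∑ k ∈ range n, φ (gridPoint a b n k) * ((b - a) / n)

lemma gridPoint_succ (a b : ℝ) (n k : ℕ) :
    gridPoint a b n (k + 1) = gridPoint a b n k + (b - a) / n := by
  simp only [gridPoint]; push_cast; ring

lemma gridPoint_mem_Icc {a b : ℝ} {n k : ℕ} (hab : a ≤ b) (hk : k ≤ n) :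
    gridPoint a b n k ∈ Set.Icc a b := by
  rcases eq_or_ne n 0 with rfl | hn
  · simp [gridPoint, hab]
  have hh : 0 ≤ (b - a) / n := div_nonneg (sub_nonneg.2 hab) n.cast_nonneg
  have hle : k * ((b - a) / n) ≤ b - a :=
    calc k * ((b - a) / n) ≤ n * ((b - a) / n) :=
          mul_le_mul_of_nonneg_right (by exact_mod_cast hk) hh
      _ = b - a := mul_div_cancel₀ _ (by exact_mod_cast hn)
  constructor <;> simp only [gridPoint] <;> linarith [mul_nonneg k.cast_nonneg hh]

lemma gridPoint_injective {a b : ℝ} {n : ℕ} (hab : a ≠ b) (hn : n ≠ 0) :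
    Function.Injective (gridPoint a b n) := by
  intro k l hkl
  have hh : (b - a) / n ≠ 0 := div_ne_zero (sub_ne_zero.2 hab.symm) (by exact_mod_cast hn)
  simpa [gridPoint, hh] using hkl

lemma abs_mul_sub_integral_le {φ : ℝ → ℝ} {x h ε : ℝ} (hh : 0 ≤ h)
    (hφ : IntervalIntegrable φ volume x (x + h))
    (hclose : ∀ t ∈ Set.Ioc x (x + h), |φ x - φ t| ≤ ε) :
    |φ x * h - ∫ t in x..x + h, φ t| ≤ ε * h := by
  have hconst : φ x * h = ∫ _ in x..x + h, φ x := by simp [mul_comm]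
  rw [hconst, ← intervalIntegral.integral_sub intervalIntegrable_const hφ]
  have := intervalIntegral.norm_integral_le_of_norm_le_const (a := x) (b := x + h)
    (f := fun t => φ x - φ t) (C := ε) fun t ht => by
      rw [Set.uIoc_of_le (by linarith)] at ht; exact hclose t ht
  simpa [abs_of_nonneg hh] using this

lemma abs_leftRiemannSum_sub_integral_le {φ : ℝ → ℝ} {a b ε : ℝ} {n : ℕ} (hab : a ≤ b)
    (hn : n ≠ 0) (hφ : ContinuousOn φ (Set.Icc a b))
    (hclose : ∀ s ∈ Set.Icc a b, ∀ t ∈ Set.Icc a b, |s - t| ≤ (b - a) / n → |φ s - φ t| ≤ ε) :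
    |leftRiemannSum φ a b n - ∫ t in a..b, φ t| ≤ ε * (b - a) := by
  set x := gridPoint a b n
  set h := (b - a) / n
  have hh : 0 ≤ h := div_nonneg (sub_nonneg.2 hab) n.cast_nonneg
  have hsucc : ∀ k, x (k + 1) = x k + h := gridPoint_succ a b n
  have hint : ∀ k < n, IntervalIntegrable φ volume (x k) (x (k + 1)) := fun k hk =>
    (hφ.mono (Set.Icc_subset_Icc (gridPoint_mem_Icc hab hk.le).1
      (gridPoint_mem_Icc hab hk).2)).intervalIntegrable_of_Icc
      (by rw [hsucc]; linarith)
  have hsplit : ∫ t in a..b, φ t = ∑ k ∈ range n, ∫ t in x k..x (k + 1), φ t := by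
    rw [intervalIntegral.sum_integral_adjacent_intervals hint]
    congr 1
    · simp [x, gridPoint]
    · simp only [x, gridPoint]; field_simp; ring
  have hpiece : ∀ k ∈ range n, |φ (x k) * h - ∫ t in x k..x (k + 1), φ t| ≤ ε * h := by
    intro k hk
    have hk := mem_range.1 hk
    have hintk := hint k hk
    rw [hsucc] at hintk ⊢
    refine abs_mul_sub_integral_le hh hintk fun t ht => hclose _ (gridPoint_mem_Icc hab hk.le) _
      ⟨(gridPoint_mem_Icc hab hk.le).1.trans ht.1.le, ht.2.trans ?_⟩ ?_
    · rw [← hsucc]; exact (gridPoint_mem_Icc hab hk).2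
    · rw [abs_sub_comm, abs_of_pos (by linarith [ht.1])]; linarith [ht.2]
  calc |leftRiemannSum φ a b n - ∫ t in a..b, φ t|
      = |∑ k ∈ range n, (φ (x k) * h - ∫ t in x k..x (k + 1), φ t)| := by
        rw [hsplit, sum_sub_distrib]; rfl
    _ ≤ ∑ k ∈ range n, ε * h := (abs_sum_le_sum_abs _ _).trans (sum_le_sum hpiece)
    _ = ε * (b - a) := by
        rw [sum_const, card_range, nsmul_eq_mul]; simp only [h]; field_simp

theorem tendsto_leftRiemannSum {φ : ℝ → ℝ} {a b : ℝ} (hab : a ≤ b)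
    (hφ : ContinuousOn φ (Set.Icc a b)) :
    Tendsto (leftRiemannSum φ a b) atTop (𝓝 (∫ t in a..b, φ t)) := by
  rw [Metric.tendsto_nhds]
  intro ε hε
  set ε' := ε / (b - a + 1)
  have hε' : 0 < ε' := div_pos hε (by linarith)
  obtain ⟨δ, hδ, hunif⟩ := Metric.uniformContinuousOn_iff.1
    (isCompact_Icc.uniformContinuousOn_of_continuous hφ) ε' hε'
  have hmesh : ∀ᶠ n : ℕ in atTop, (b - a) / n < δ :=
    (tendsto_const_div_atTop_nhds_zero_nat (b - a)).eventually (gt_mem_nhds hδ)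
  filter_upwards [hmesh, eventually_ne_atTop 0] with n hn hn0
  rw [Real.dist_eq]
  calc |leftRiemannSum φ a b n - ∫ t in a..b, φ t| ≤ ε' * (b - a) :=
        abs_leftRiemannSum_sub_integral_le hab hn0 hφ fun s hs t ht hst =>
          (hunif s hs t ht ((Real.dist_eq s t).trans_lt (hst.trans_lt hn))).le
    _ < ε := by
        rw [div_mul_eq_mul_div, div_lt_iff₀ (by linarith)]; nlinarith

lemma image_powerset_range_sum_two_pow (r : ℕ) :
    (range r).powerset.image (fun T => ∑ j ∈ T, 2 ^ j) = range (2 ^ r) := by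
  ext k
  simp only [mem_image, mem_powerset, mem_range]
  constructor
  · rintro ⟨T, hT, rfl⟩
    exact Nat.geomSum_lt le_rfl fun j hj => mem_range.1 (hT hj)
  · intro hk
    refine ⟨k.bitIndices.toFinset, fun j hj => mem_range.2 ?_, sum_toFinset_bitIndices_two_pow k⟩
    exact (Nat.pow_lt_pow_iff_right one_lt_two).1
      ((Nat.two_pow_le_of_mem_bitIndices (List.mem_toFinset.1 hj)).trans_lt hk)

lemma powerset_Icc_one_eq_image (r : ℕ) :
    (Icc 1 r).powerset = (range r).powerset.image (fun T => T.image (r - ·)) := by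
  ext S
  simp only [mem_powerset, mem_image, subset_iff, mem_Icc, mem_range]
  constructor
  · intro hS
    refine ⟨S.image (r - ·), fun j hj => ?_, ?_⟩
    · obtain ⟨i, hi, rfl⟩ := mem_image.1 hj
      have := hS hi; omega
    · rw [image_image]
      refine (image_congr fun i hi => ?_).trans S.image_id
      have := hS hi; simp only [Function.comp, id]; omega
  · rintro ⟨T, hT, rfl⟩ i hi
    obtain ⟨j, hj, rfl⟩ := mem_image.1 hi
    have := hT hj; omega

lemma sum_image_sub_two_zpow {r : ℕ} {T : Finset ℕ} (hT : T ⊆ range r) :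
    ∑ i ∈ T.image (r - ·), (2 : ℝ) ^ (-(i : ℤ)) = (∑ j ∈ T, 2 ^ j : ℕ) / (2 ^ r : ℕ) := by
  have hlt : ∀ j ∈ T, j < r := fun j hj => mem_range.1 (hT hj)
  rw [sum_image fun j hj k hk hjk => by have := hlt j hj; have := hlt k hk; omega,
    Nat.cast_sum, sum_div]
  refine sum_congr rfl fun j hj => ?_
  rw [eq_div_iff (by positivity)]
  push_cast
  rw [← zpow_natCast, ← zpow_natCast, ← zpow_add₀ two_ne_zero]
  congr 1
  have := hlt j hj
  omega

lemma omegaSetTrunc_eq_image_gridPoint (d₁ d₂ : ℝ) (r : ℕ) :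
    omegaSetTrunc d₁ d₂ r = (range (2 ^ r)).image (gridPoint d₁ d₂ (2 ^ r)) := by
  rw [omegaSetTrunc, powerset_Icc_one_eq_image, image_image, ← image_powerset_range_sum_two_pow,
    image_image]
  refine image_congr fun T hT => ?_
  simp only [Function.comp, gridPoint, sum_image_sub_two_zpow (mem_powerset.1 hT)]
  ring

lemma integral_boltzmann (β : ℝ) (S : Finset ℝ) (H f : ℝ → ℝ) :
    ∫ x, f x ∂(boltzmann β S H) =
      (∑ x ∈ S, f x * Real.exp (-β ^ 2 * H x)) / ∑ x ∈ S, Real.exp (-β ^ 2 * H x) := by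
  rw [boltzmann, integral_finsetSum_measure fun x _ =>
    (integrable_dirac (by simp)).smul_measure ENNReal.ofReal_ne_top, sum_div]
  refine sum_congr rfl fun x _ => ?_
  have hZ : 0 ≤ ∑ y ∈ S, Real.exp (-β ^ 2 * H y) := sum_nonneg fun y _ => (Real.exp_pos _).le
  rw [integral_smul_measure, integral_dirac, ENNReal.toReal_ofReal (by positivity), smul_eq_mul]
  ring

lemma integral_boltzmann_omegaSetTrunc {d₁ d₂ : ℝ} (hd : d₁ ≠ d₂) (β : ℝ) (H f : ℝ → ℝ)
    (r : ℕ) :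
    ∫ x, f x ∂(boltzmann β (omegaSetTrunc d₁ d₂ r) H) =
      leftRiemannSum (fun t => f t * Real.exp (-β ^ 2 * H t)) d₁ d₂ (2 ^ r) /
        leftRiemannSum (fun t => Real.exp (-β ^ 2 * H t)) d₁ d₂ (2 ^ r) := by
  have hh : (d₂ - d₁) / (2 ^ r : ℕ) ≠ 0 := div_ne_zero (sub_ne_zero.2 hd.symm) (by positivity)
  have hinj := (gridPoint_injective hd (pow_ne_zero r two_ne_zero)).injOn (s := range (2 ^ r))
  rw [integral_boltzmann, omegaSetTrunc_eq_image_gridPoint, sum_image hinj, sum_image hinj,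
    leftRiemannSum, leftRiemannSum, ← sum_mul, ← sum_mul, mul_div_mul_right _ _ hh]

lemma integral_truncGaussian (μ v d₁ d₂ : ℝ) (f : ℝ → ℝ) :
    ∫ x, f x ∂(truncGaussian μ v d₁ d₂) =
      (∫ t in Set.Ioo d₁ d₂, f t * Real.exp (-(t - μ) ^ 2 / (2 * v))) /
        ∫ t in Set.Ioo d₁ d₂, Real.exp (-(t - μ) ^ 2 / (2 * v)) := by
  set g := fun t => Real.exp (-(t - μ) ^ 2 / (2 * v))
  set Z := ∫ t in Set.Ioo d₁ d₂, g t
  have hZ : 0 ≤ Z := setIntegral_nonneg measurableSet_Ioo fun t _ => (Real.exp_pos _).le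
  rw [truncGaussian]
  set ρ := Set.indicator (Set.Ioo d₁ d₂) fun t => g t / Z
  have hρ : Measurable ρ := (Measurable.div_const (by fun_prop) _).indicator measurableSet_Ioo
  have hρ0 : ∀ t, 0 ≤ ρ t :=
    Set.indicator_nonneg fun t _ => div_nonneg (Real.exp_pos _).le hZ
  rw [integral_withDensity_eq_integral_toReal_smul hρ.ennreal_ofReal
    (ae_of_all _ fun _ => ENNReal.ofReal_lt_top), ← integral_div]
  simp_rw [ENNReal.toReal_ofReal (hρ0 _), smul_eq_mul, ρ, ← Set.indicator_mul_left]
  rw [integral_indicator measurableSet_Ioo]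
  refine setIntegral_congr_fun measurableSet_Ioo fun t _ => ?_
  simp only [g]
  ring

lemma gaussian_exponent_eq {a : ℝ} (ha : a ≠ 0) (b β t : ℝ) :
    -(t - b / a) ^ 2 / (2 * (1 / (2 * a ^ 2 * β ^ 2))) = -β ^ 2 * (a * t - b) ^ 2 := by
  have hlin : a * t - b = a * (t - b / a) := by field_simp
  rw [hlin]
  simp only [div_eq_mul_inv, mul_inv, inv_inv]
  ring

theorem boltzmann_tendsto_truncGaussian_general
    (a b β d₁ d₂ : ℝ) (ha : a ≠ 0) (hd : d₁ < d₂) :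
    ∀ f : BoundedContinuousFunction ℝ ℝ,
      Tendsto
        (fun r => ∫ x, f x ∂(boltzmann β (omegaSetTrunc d₁ d₂ r) fun x => (a * x - b) ^ 2))
        atTop
        (nhds (∫ x, f x ∂(truncGaussian (b / a) (1 / (2 * a ^ 2 * β ^ 2)) d₁ d₂))) := by
  intro f
  set g := fun t => Real.exp (-β ^ 2 * (a * t - b) ^ 2)
  have hg : Continuous g := by fun_prop
  have hZ : 0 < ∫ t in d₁..d₂, g t :=
    intervalIntegral.intervalIntegral_pos_of_pos (hg.intervalIntegrable _ _)
      (fun t => Real.exp_pos _) hd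
  simp only [integral_boltzmann_omegaSetTrunc hd.ne, integral_truncGaussian,
    gaussian_exponent_eq ha, ← integral_Ioc_eq_integral_Ioo,
    ← intervalIntegral.integral_of_le hd.le]
  have hpow : Tendsto (fun r : ℕ => 2 ^ r) atTop atTop :=
    tendsto_pow_atTop_atTop_of_one_lt one_lt_two
  exact ((tendsto_leftRiemannSum hd.le (f.continuous.mul hg).continuousOn).comp hpow).div
    ((tendsto_leftRiemannSum hd.le hg.continuousOn).comp hpow) hZ.ne'

/-- As `r → ∞`, the Boltzmann distributions `B(β, Ω_r, (ax-b)²)` converge in distribution to the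
truncated normal distribution `N(b/a, 1/(2a²β²), d₁, d₂)`. -/
theorem boltzmann_tendsto_truncGaussian
    (a b β d₁ d₂ : ℝ) (ha : a ≠ 0) (hβ : 0 < β) (hd : d₁ < d₂) :
    ∀ f : BoundedContinuousFunction ℝ ℝ,
      Tendsto
        (fun r => ∫ x, f x ∂(boltzmann β (omegaSetTrunc d₁ d₂ r) fun x => (a * x - b) ^ 2))
        atTop
        (nhds (∫ x, f x ∂(truncGaussian (b / a) (1 / (2 * a ^ 2 * β ^ 2)) d₁ d₂))) :=
  boltzmann_tendsto_truncGaussian_general a b β d₁ d₂ ha hd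
end
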